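/- For even N ≥ 4, any nonzero vector P_Z in the GF(2) edge space of K_N that is orthogonal to all of C_2 but not contained in the triangle space C_1^⊥ has support of size (Hamming weight) at least N/2. -/
import Mathlib


open Finset

/-- Index type for edges of the complete graph on `Fin n`: non-diagonal unordered pairs. -/
abbrev EdgeIdx (n : ℕ) := {p : Sym2 (Fin n) // ¬ p.IsDiag}

/-- The GF(2) edge space of the complete graph `K_n`. -/
abbrev EdgeSpace (n : ℕ) := EdgeIdx n → ZMod 2

/-- The basis vector `e_{ij}` of the edge space (zero when `i = j`). -/
def eVec (n : ℕ) (i j : Fin n) : EdgeSpace n :=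
  fun p => if (p : Sym2 (Fin n)) = s(i, j) then 1 else 0

/-- The star vector `A_j := Σ_{l ≠ j} e_{lj}` (the term `l = j` contributes zero). -/
def starVec (n : ℕ) (j : Fin n) : EdgeSpace n := ∑ l : Fin n, eVec n l j

/-- The triangle vector `T_{ijk} := e_{ij} + e_{jk} + e_{ki}`. -/
def triVec (n : ℕ) (i j k : Fin n) : EdgeSpace n := eVec n i j + eVec n j k + eVec n k i

/-- The GF(2) dot product on the edge space. -/
def edot {n : ℕ} (v w : EdgeSpace n) : ZMod 2 := ∑ p : EdgeIdx n, v p * w p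

/-- `C_1 = span{A_1, …, A_{n-1}}` (vertices `0, …, n-2` in 0-indexed notation). -/
def C1 (n : ℕ) : Submodule (ZMod 2) (EdgeSpace n) :=
  Submodule.span (ZMod 2) (starVec n '' {j : Fin n | (j : ℕ) < n - 1})

/-- `C_1^⊥ = span{T_{1jk} : 2 ≤ j < k ≤ n}` (triangles through vertex `0`). -/
def C1perp (n : ℕ) [NeZero n] : Submodule (ZMod 2) (EdgeSpace n) :=
  Submodule.span (ZMod 2)
    {v | ∃ j k : Fin n, j ≠ 0 ∧ k ≠ 0 ∧ j ≠ k ∧ v = triVec n 0 j k}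

/-- `C_2 = span{A_1 + A_j : 2 ≤ j ≤ n-1}` (vertices `1, …, n-2` in 0-indexed notation). -/
def C2 (n : ℕ) [NeZero n] : Submodule (ZMod 2) (EdgeSpace n) :=
  Submodule.span (ZMod 2)
    {v | ∃ j : Fin n, 0 < (j : ℕ) ∧ (j : ℕ) < n - 1 ∧ v = starVec n 0 + starVec n j}

/-- Hamming weight (size of the support). -/
def wt {n : ℕ} (v : EdgeSpace n) : ℕ := (Finset.univ.filter fun p => v p ≠ 0).card

/-- The perfect-matching vector `Σ_{i=1}^{N/2} e_{2i-1, 2i}` (0-indexed: edges `{2i, 2i+1}`). -/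
def matching (N : ℕ) : EdgeSpace N :=
  ∑ i : Fin (N / 2),
    eVec N ⟨2 * i.val, by have := i.isLt; omega⟩ ⟨2 * i.val + 1, by have := i.isLt; omega⟩

/-- Restriction of an edge-space vector to the coordinates of edges incident to vertex `r`;
recorded as the function `k ↦ v(e_{rk})` (with value `0` at `k = r`). -/
def projVec (n : ℕ) (r : Fin n) (v : EdgeSpace n) : Fin n → ZMod 2 :=
  fun k => edot v (eVec n r k)

section Aux
variable {n : ℕ}

lemma eVec_symm (i j : Fin n) : eVec n i j = eVec n j i := by
  funext p; simp [eVec, Sym2.eq_swap]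

lemma zmod2_cases (x : ZMod 2) : x = 0 ∨ x = 1 := by revert x; decide

lemma zmod2_add_eq_zero {a b : ZMod 2} (h : a + b = 0) : a = b := by revert h; revert a b; decide

lemma edot_add_right (v w u : EdgeSpace n) : edot v (w + u) = edot v w + edot v u := by
  simp [edot, mul_add, Finset.sum_add_distrib]

lemma edot_add_left (v w u : EdgeSpace n) : edot (v + w) u = edot v u + edot w u := by
  simp [edot, add_mul, Finset.sum_add_distrib]

lemma edot_smul_left (c : ZMod 2) (v u : EdgeSpace n) : edot (c • v) u = c * edot v u := by
  simp [edot, Finset.mul_sum, mul_assoc]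

lemma edot_sum_left {ι : Type*} (s : Finset ι) (f : ι → EdgeSpace n) (u : EdgeSpace n) :
    edot (∑ i ∈ s, f i) u = ∑ i ∈ s, edot (f i) u := by
  simp [edot, Finset.sum_mul]
  exact Finset.sum_comm

lemma starVec_apply (l : Fin n) (q : EdgeIdx n) :
    starVec n l q = if l ∈ (q : Sym2 (Fin n)) then 1 else 0 := by
  obtain ⟨q, hq⟩ := q
  induction q using Sym2.ind with
  | _ a b =>
    have hab : a ≠ b := by simpa using hq
    simp only [starVec, Finset.sum_apply, eVec]
    rcases eq_or_ne l a with rfl | hla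
    · rw [Finset.sum_congr rfl (fun m _ => if_congr (show ((s(l,b) : Sym2 (Fin n)) = s(m,l)) ↔ m = b from by
        rw [Sym2.eq_iff]; constructor
        · rintro (⟨h1,h2⟩|⟨h1,h2⟩)
          exacts [absurd h2 (Ne.symm hab), h2.symm]
        · rintro rfl; right; exact ⟨rfl, rfl⟩) rfl rfl)]
      simp [Sym2.mem_iff]
    · rcases eq_or_ne l b with rfl | hlb
      · rw [Finset.sum_congr rfl (fun m _ => if_congr (show ((s(a,l) : Sym2 (Fin n)) = s(m,l)) ↔ m = a from by
          rw [Sym2.eq_iff]; constructor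
          · rintro (⟨h1,h2⟩|⟨h1,h2⟩)
            exacts [h1.symm, absurd h1 hab]
          · rintro rfl; left; exact ⟨rfl, rfl⟩) rfl rfl)]
        simp [Sym2.mem_iff]
      · rw [Finset.sum_congr rfl (fun m _ => if_congr (show ((s(a,b) : Sym2 (Fin n)) = s(m,l)) ↔ False from by
          rw [Sym2.eq_iff]; constructor
          · rintro (⟨h1,h2⟩|⟨h1,h2⟩)
            exacts [hlb h2.symm, hla h1.symm]
          · exact False.elim) rfl rfl)]
        simp [Sym2.mem_iff, hla, hlb]

lemma edot_star (v : EdgeSpace n) (l : Fin n) :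
    edot v (starVec n l) = ∑ q ∈ Finset.univ.filter (fun q : EdgeIdx n => l ∈ (q : Sym2 (Fin n))), v q := by
  rw [edot, Finset.sum_filter]
  refine Finset.sum_congr rfl fun q _ => ?_
  rw [starVec_apply]
  split <;> simp

lemma edot_eVec (v : EdgeSpace n) (i j : Fin n) (hij : i ≠ j) :
    edot v (eVec n i j) = v ⟨s(i, j), by simp [hij]⟩ := by
  rw [edot]
  rw [Finset.sum_eq_single (⟨s(i, j), by simp [hij]⟩ : EdgeIdx n)]
  · simp [eVec]
  · intro q _ hq
    have : (q : Sym2 (Fin n)) ≠ s(i, j) := fun h => hq (Subtype.ext h)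
    simp [eVec, this]
  · simp

end Aux
section Aux2
variable {n : ℕ}

lemma sum_mem_indicator (q : EdgeIdx n) :
    (∑ l : Fin n, if l ∈ (q : Sym2 (Fin n)) then (1 : ZMod 2) else 0) = 0 := by
  obtain ⟨q, hq⟩ := q
  induction q using Sym2.ind with
  | _ a b =>
    have hab : a ≠ b := by simpa using hq
    have hmem : ∀ l : Fin n, ((l ∈ (⟨s(a,b), hq⟩ : EdgeIdx n).1)) ↔ (l = a ∨ l = b) := by
      intro l; exact Sym2.mem_iff
    rw [Finset.sum_congr rfl (fun l _ => if_congr (hmem l) rfl rfl)]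
    rw [Finset.sum_congr rfl (fun l _ => show (if l = a ∨ l = b then (1:ZMod 2) else 0)
        = (if l = a then 1 else 0) + (if l = b then 1 else 0) from by
      rcases eq_or_ne l a with rfl | h1
      · simp [hab]
      · rcases eq_or_ne l b with rfl | h2
        · simp [h1]
        · simp [h1, h2])]
    rw [Finset.sum_add_distrib]
    simp only [Finset.sum_ite_eq', Finset.mem_univ, if_true]
    decide

lemma sum_star_zero (v : EdgeSpace n) : ∑ l : Fin n, edot v (starVec n l) = 0 := by
  have : ∀ l, edot v (starVec n l)
      = ∑ q : EdgeIdx n, v q * (if l ∈ (q : Sym2 (Fin n)) then 1 else 0) := by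
    intro l; rw [edot]; exact Finset.sum_congr rfl fun q _ => by rw [starVec_apply]
  simp_rw [this]
  rw [Finset.sum_comm]
  refine Finset.sum_eq_zero fun q _ => ?_
  rw [← Finset.mul_sum, sum_mem_indicator, mul_zero]

lemma triVec_symm [NeZero n] (a b : Fin n) : triVec n 0 a b = triVec n 0 b a := by
  unfold triVec
  rw [eVec_symm b a, eVec_symm a 0, eVec_symm 0 b]
  abel

lemma edot_eVec_star (i j l : Fin n) (hij : i ≠ j) :
    edot (eVec n i j) (starVec n l) = if l = i ∨ l = j then 1 else 0 := by
  have : ∀ w : EdgeSpace n, edot (eVec n i j) w = edot w (eVec n i j) := by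
    intro w; unfold edot; exact Finset.sum_congr rfl fun q _ => mul_comm _ _
  rw [this, edot_eVec _ _ _ hij, starVec_apply]
  simp [Sym2.mem_iff]

lemma edot_tri_star (a b l : Fin n) [NeZero n] (ha : a ≠ 0) (hb : b ≠ 0) (hab : a ≠ b) :
    edot (triVec n 0 a b) (starVec n l) = 0 := by
  unfold triVec
  rw [edot_add_left, edot_add_left, edot_eVec_star _ _ _ (Ne.symm ha),
    edot_eVec_star _ _ _ hab, edot_eVec_star _ _ _ hb]
  rcases eq_or_ne l 0 with rfl | h0
  · simp only [Ne.symm ha, Ne.symm hb, or_false, false_or, if_true, eq_self_iff_true,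
      if_false, or_self]
    simp [Ne.symm ha, Ne.symm hb]
    decide
  · rcases eq_or_ne l a with rfl | hla
    · simp [h0, hab]
      decide
    · rcases eq_or_ne l b with rfl | hlb
      · simp [h0, Ne.symm hab]
        decide
      · simp [h0, hla, hlb]

end Aux2
section Tri
variable {n : ℕ} [NeZero n]

def triFun (n : ℕ) [NeZero n] : Sym2 (Fin n) → EdgeSpace n :=
  Sym2.lift ⟨fun a b => if a = 0 ∨ b = 0 ∨ a = b then 0 else triVec n 0 a b, by
    intro a b
    show (if a = 0 ∨ b = 0 ∨ a = b then 0 else triVec n 0 a b)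
        = (if b = 0 ∨ a = 0 ∨ b = a then 0 else triVec n 0 b a)
    refine if_congr ⟨?_, ?_⟩ rfl (triVec_symm a b) <;>
      (rintro (h|h|h); exacts [Or.inr (Or.inl h), Or.inl h, Or.inr (Or.inr h.symm)])⟩

lemma triFun_mk (a b : Fin n) :
    triFun n s(a, b) = if a = 0 ∨ b = 0 ∨ a = b then 0 else triVec n 0 a b :=
  Sym2.lift_mk _ a b

lemma triFun_mem (p : Sym2 (Fin n)) : triFun n p ∈ C1perp n := by
  induction p using Sym2.ind with
  | _ a b =>
    rw [triFun_mk]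
    split_ifs with h
    · exact zero_mem _
    · push_neg at h
      exact Submodule.subset_span ⟨a, b, h.1, h.2.1, h.2.2, rfl⟩

lemma triFun_apply (p : Sym2 (Fin n)) (hp : ¬ p.IsDiag) (q : EdgeIdx n)
    (hq : (0 : Fin n) ∉ (q : Sym2 (Fin n))) :
    triFun n p q = if (q : Sym2 (Fin n)) = p then 1 else 0 := by
  induction p using Sym2.ind with
  | _ a b =>
    have hab : a ≠ b := by simpa using hp
    rw [triFun_mk]
    by_cases hcase : a = 0 ∨ b = 0 ∨ a = b
    · rw [if_pos hcase]
      have hne : (q : Sym2 (Fin n)) ≠ s(a, b) := by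
        intro hc
        rcases hcase with h | h | h
        · exact hq (hc ▸ h ▸ Sym2.mem_mk_left _ _)
        · exact hq (hc ▸ h ▸ Sym2.mem_mk_right _ _)
        · exact hab h
      rw [if_neg hne]; rfl
    · rw [if_neg hcase]
      push_neg at hcase
      have h1 : (q : Sym2 (Fin n)) ≠ s(0, a) := by
        intro hc; exact hq (hc ▸ Sym2.mem_mk_left _ _)
      have h3 : (q : Sym2 (Fin n)) ≠ s(b, 0) := by
        intro hc; exact hq (hc ▸ Sym2.mem_mk_right _ _)
      show (if (q : Sym2 (Fin n)) = s(0,a) then (1:ZMod 2) else 0)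
          + (if (q : Sym2 (Fin n)) = s(a,b) then 1 else 0)
          + (if (q : Sym2 (Fin n)) = s(b,0) then 1 else 0)
          = if (q : Sym2 (Fin n)) = s(a,b) then 1 else 0
      rw [if_neg h1, if_neg h3]
      ring

lemma edot_triFun_star (p : Sym2 (Fin n)) (l : Fin n) :
    edot (triFun n p) (starVec n l) = 0 := by
  induction p using Sym2.ind with
  | _ a b =>
    rw [triFun_mk]
    split_ifs with h
    · simp [edot]
    · push_neg at h
      exact edot_tri_star a b l h.1 h.2.1 h.2.2

omit [NeZero n] in
lemma sym2_eq_of_two_mem {x y : Fin n} {p : Sym2 (Fin n)} (hxy : x ≠ y)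
    (hx : x ∈ p) (hy : y ∈ p) : p = s(x, y) :=
  (Sym2.mem_and_mem_iff hxy).mp ⟨hx, hy⟩

end Tri


/-- For even `N ≥ 4` ... -/
theorem weight_lower_bound (N : ℕ) [NeZero N] (hN : 4 ≤ N) (hEven : Even N)
    (P : EdgeSpace N) (hP : P ≠ 0)
    (horth : ∀ w ∈ C2 N, edot P w = 0) (hnot : P ∉ C1perp N) :
    N / 2 ≤ wt P := by
  classical
  have hxx : ∀ y : ZMod 2, y + y = 0 := by decide
  set d : Fin N → ZMod 2 := fun l => edot P (starVec N l) with hd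
  have hdeq : ∀ j : Fin N, d j = d 0 := by
    have h1 : ∀ j : Fin N, (j : ℕ) < N - 1 → d j = d 0 := by
      intro j hj
      rcases eq_or_ne j 0 with rfl | hj0
      · rfl
      have hjpos : 0 < (j : ℕ) := Nat.pos_of_ne_zero (fun h => hj0 (Fin.ext h))
      have horthj := horth (starVec N 0 + starVec N j)
        (Submodule.subset_span ⟨j, hjpos, hj, rfl⟩)
      rw [edot_add_right] at horthj
      exact (zmod2_add_eq_zero horthj).symm
    intro j
    rcases lt_or_ge (j : ℕ) (N - 1) with hj | hj
    · exact h1 j hj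
    have hjval : (j : ℕ) = N - 1 := by have := j.isLt; omega
    have hsum : ∑ l : Fin N, d l = 0 := sum_star_zero P
    have hsplit : ∑ l ∈ Finset.univ.erase j, d l + d j = ∑ l : Fin N, d l :=
      Finset.sum_erase_add _ _ (Finset.mem_univ j)
    have herase : ∑ l ∈ Finset.univ.erase j, d l = (N - 1) • d 0 := by
      rw [Finset.sum_congr rfl (fun l hl => h1 l (by
        have hlj := Finset.ne_of_mem_erase hl
        have hne : (l : ℕ) ≠ (j : ℕ) := fun h => hlj (Fin.ext h)
        have := l.isLt
        omega))]
      rw [Finset.sum_const, Finset.card_erase_of_mem (Finset.mem_univ j),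
        Finset.card_univ, Fintype.card_fin]
    obtain ⟨m, hm⟩ := hEven
    have hodd : N - 1 = 2 * (m - 1) + 1 := by omega
    have hsmul : (N - 1) • d 0 = d 0 := by
      rw [hodd, add_nsmul, one_nsmul, mul_nsmul, two_nsmul, hxx, smul_zero, zero_add]
    rw [herase, hsum] at hsplit
    exact (zmod2_add_eq_zero hsplit).symm.trans hsmul
  rcases zmod2_cases (d 0) with h0 | h0
  · -- all degrees even: P lies in the triangle space, contradiction
    exfalso; apply hnot
    set S : EdgeSpace N := ∑ q : EdgeIdx N, P q • triFun N (q : Sym2 (Fin N)) with hS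
    have hSmem : S ∈ C1perp N :=
      Submodule.sum_mem _ fun q _ => Submodule.smul_mem _ _ (triFun_mem _)
    have hR0 : ∀ q : EdgeIdx N, (0 : Fin N) ∉ (q : Sym2 (Fin N)) → P q + S q = 0 := by
      intro q hq
      have hSq : S q = P q := by
        rw [hS, Finset.sum_apply]
        rw [Finset.sum_eq_single q]
        · rw [Pi.smul_apply, triFun_apply _ q.2 q hq, if_pos rfl, smul_eq_mul, mul_one]
        · intro p _ hpq
          rw [Pi.smul_apply, triFun_apply _ p.2 q hq,
            if_neg (fun h => hpq (Subtype.ext h.symm)), smul_eq_mul, mul_zero]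
        · intro h; exact absurd (Finset.mem_univ q) h
      rw [hSq]; exact hxx _
    have hRstar : ∀ l, edot (P + S) (starVec N l) = 0 := by
      intro l
      rw [edot_add_left]
      have h2 : edot S (starVec N l) = 0 := by
        rw [hS, edot_sum_left]
        refine Finset.sum_eq_zero fun q _ => ?_
        rw [edot_smul_left, edot_triFun_star, mul_zero]
      rw [h2, add_zero]
      have hdl : edot P (starVec N l) = d l := rfl
      rw [hdl, hdeq l, h0]
    have hRzero : ∀ q : EdgeIdx N, P q + S q = 0 := by
      intro q
      by_cases hq0 : (0 : Fin N) ∈ (q : Sym2 (Fin N))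
      · obtain ⟨k, hk⟩ := Sym2.mem_iff_exists.mp hq0
        have hk0 : k ≠ 0 := by
          rintro rfl; apply q.2; rw [hk]; simp
        have hstar := hRstar k
        rw [edot_star] at hstar
        rw [Finset.sum_eq_single_of_mem q (by simp [hk]) ?_] at hstar
        · exact hstar
        · intro p hp hpq
          have hkp : k ∈ (p : Sym2 (Fin N)) := by simpa using hp
          have h0p : (0 : Fin N) ∉ (p : Sym2 (Fin N)) := by
            intro h0p
            exact hpq (Subtype.ext ((sym2_eq_of_two_mem (Ne.symm hk0) h0p hkp).trans hk.symm))
          exact hR0 p h0p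
      · exact hR0 q hq0
    have hPS : P = S := funext fun q => zmod2_add_eq_zero (hRzero q)
    rw [hPS]; exact hSmem
  · -- all degrees odd: every vertex is covered
    have hall : ∀ l : Fin N, ∃ q : EdgeIdx N, l ∈ (q : Sym2 (Fin N)) ∧ P q ≠ 0 := by
      intro l
      by_contra hc
      push_neg at hc
      have hzero : d l = 0 := by
        rw [hd]
        show edot P (starVec N l) = 0
        rw [edot_star]
        exact Finset.sum_eq_zero fun q hq => hc q (by simpa using hq)
      rw [hdeq l, h0] at hzero
      exact one_ne_zero hzero
    choose f hf1 hf2 using hall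
    have hcard : (Finset.univ : Finset (Fin N)).card ≤ 2 * wt P := by
      refine Finset.card_le_mul_card_image_of_maps_to (f := f)
        (t := Finset.univ.filter fun q => P q ≠ 0) (fun l _ => by simp [hf2 l]) 2
        (fun q hq => ?_)
      have hsub : (Finset.univ.filter fun l => f l = q)
          ⊆ Finset.univ.filter (fun l => l ∈ (q : Sym2 (Fin N))) := by
        intro l hl
        simp only [Finset.mem_filter] at hl ⊢
        exact ⟨hl.1, hl.2 ▸ hf1 l⟩
      refine le_trans (Finset.card_le_card hsub) ?_
      obtain ⟨qq, hq2⟩ := q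
      induction qq using Sym2.ind with
      | _ a b =>
        have hsub2 : Finset.univ.filter (fun l => l ∈ ((⟨s(a,b), hq2⟩ : EdgeIdx N) : Sym2 (Fin N)))
            ⊆ {a, b} := by
          intro l hl
          simp only [Finset.mem_filter] at hl
          simpa [Sym2.mem_iff] using hl.2
        refine le_trans (Finset.card_le_card hsub2) ?_
        refine le_trans (Finset.card_insert_le _ _) (by simp)
    rw [Finset.card_univ, Fintype.card_fin] at hcard
    omega
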